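/- arXiv:2408.03610 — 2 statements merged into one kernel-verified Lean document; each statement's English description precedes it below -/
import Mathlib

section
/- Let T be a string with wildcards, Sel a set of positions containing n, and define Jump[i,j] for i ∈ Sel and j ∈ [1..n] as max{i'−i : i' ∈ Sel, i' ≥ i, T[i..i'] ∼ T[j..j+i'−i]} (or −∞ if no such i' exists). Let i_r < i_{r+1} be two consecutive elements of Sel with ℓ_r = i_{r+1} − i_r, and suppose j + ℓ_r ≤ n. Then Jump satisfies the recurrence: Jump[i_r, j] = −∞ if T[i_r] ≁ T[j]; Jump[i_r, j] = max(0, ℓ_r + Jump[i_{r+1}, j+ℓ_r]) if T[i_r] ∼ T[j] and T[i_r..i_{r+1}) ∼ T[j..j+ℓ_r); and Jump[i_r, j] = 0 otherwise. -/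
variable {α : Type*}

/-- Wildcard match relation on characters: `a ∼ b ↔ a = b ∨ a = d ∨ b = d`,
where `d` is the wildcard. -/
def mtch (d a b : α) : Prop := a = b ∨ a = d ∨ b = d

instance [DecidableEq α] (d a b : α) : Decidable (mtch d a b) :=
  inferInstanceAs (Decidable (a = b ∨ a = d ∨ b = d))

/-- Positionwise match of equal-length strings (lists). -/
def smatch (d : α) (X Y : List α) : Prop :=
  X.length = Y.length ∧ ∀ i < X.length, mtch d (X.getD i d) (Y.getD i d)

/-- Longest common extension with wildcards in a single string `T`,
0-based positions. -/
def lcew [DecidableEq α] (d : α) (T : List α) (i j : ℕ) : ℕ :=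
  Nat.findGreatest
    (fun ℓ => ℓ ≤ min (T.length - i) (T.length - j) ∧
      ∀ p < ℓ, mtch d (T.getD (i + p) d) (T.getD (j + p) d)) T.length

/-- Longest common extension with wildcards between two strings `P` and `Q`,
0-based positions. -/
def lcew2 [DecidableEq α] (d : α) (P Q : List α) (i j : ℕ) : ℕ :=
  Nat.findGreatest
    (fun ℓ => ℓ ≤ min (P.length - i) (Q.length - j) ∧
      ∀ p < ℓ, mtch d (P.getD (i + p) d) (Q.getD (j + p) d))
    (P.length + Q.length)

/-- The fragment `T[i..i']` (inclusive) matches `T[j..j+(i'-i)]` positionwise. -/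
def fragMatch [DecidableEq α] (d : α) (T : List α) (i i' j : ℕ) : Prop :=
  ∀ p ≤ i' - i, mtch d (T.getD (i + p) d) (T.getD (j + p) d)

instance [DecidableEq α] (d : α) (T : List α) (i i' j : ℕ) :
    Decidable (fragMatch d T i i' j) := by
  unfold fragMatch; infer_instance

/-- `jump d T Sel i j = max {i' - i : i' ∈ Sel, i' ≥ i, T[i..i'] ∼ T[j..j+i'-i]}`,
or `⊥` (i.e. `-∞`) if no such `i'` exists. -/
def jump [DecidableEq α] (d : α) (T : List α) (Sel : Finset ℕ) (i j : ℕ) :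
    WithBot ℕ :=
  WithBot.map (fun i' => i' - i)
    ((Sel.filter (fun i' => i ≤ i' ∧ j + (i' - i) < T.length ∧
        fragMatch d T i i' j)).max)

/-!
A candidate `i'` for `jump d T Sel i₁ j` is either `i₁` itself, which qualifies exactly when
`T[i₁] ∼ T[j]`, or lies strictly beyond `i₁`; since no element of `Sel` lies strictly between
`i₁` and `i₂`, it then lies at or beyond `i₂`, and `T[i₁..i'] ∼ T[j..]` splits into the block
`T[i₁..i₂) ∼ T[j..j+ℓ)`, `ℓ = i₂ - i₁`, and a candidate for `jump d T Sel i₂ (j + ℓ)`. Taking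
maxima gives the recurrence.
-/

section Jump

variable [DecidableEq α] (d : α) (T : List α) (Sel : Finset ℕ)

def jumpCands (i j : ℕ) : Finset ℕ :=
  Sel.filter (fun i' => i ≤ i' ∧ j + (i' - i) < T.length ∧ fragMatch d T i i' j)

theorem jump_eq_map_max (i j : ℕ) :
    jump d T Sel i j = (jumpCands d T Sel i j).max.map (· - i) := rfl

variable {d T Sel}

theorem fragMatch_iff_of_le {i k i' j : ℕ} (hik : i ≤ k) (hki' : k ≤ i') :
    fragMatch d T i i' j ↔
      (∀ p < k - i, mtch d (T.getD (i + p) d) (T.getD (j + p) d)) ∧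
        fragMatch d T k i' (j + (k - i)) := by
  constructor
  · intro h
    refine ⟨fun p hp => h p (by omega), fun p hp => ?_⟩
    have := h (k - i + p) (by omega)
    rwa [show i + (k - i + p) = k + p by omega, ← Nat.add_assoc] at this
  · rintro ⟨hblock, hrest⟩ p hp
    rcases lt_or_ge p (k - i) with hpk | hpk
    · exact hblock p hpk
    · have := hrest (p - (k - i)) (by omega)
      rwa [show k + (p - (k - i)) = i + p by omega,
        show j + (k - i) + (p - (k - i)) = j + p by omega] at this

theorem self_mem_jumpCands {i j : ℕ} (hi : i ∈ Sel) (hj : j < T.length)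
    (hm : mtch d (T.getD i d) (T.getD j d)) : i ∈ jumpCands d T Sel i j := by
  refine Finset.mem_filter.mpr ⟨hi, le_rfl, by simpa using hj, fun p hp => ?_⟩
  obtain rfl : p = 0 := by omega
  simpa using hm

theorem jumpCands_eq_empty {i j : ℕ} (hm : ¬ mtch d (T.getD i d) (T.getD j d)) :
    jumpCands d T Sel i j = ∅ :=
  Finset.filter_eq_empty_iff.mpr fun _ _ ⟨_, _, hfrag⟩ =>
    hm (by simpa using hfrag 0 (Nat.zero_le _))

theorem le_of_mem_jumpCands {i j i' : ℕ} (h : i' ∈ jumpCands d T Sel i j) : i ≤ i' :=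
  (Finset.mem_filter.mp h).2.1

variable {i₁ i₂ : ℕ} (h12 : i₁ < i₂) (hcons : ∀ q ∈ Sel, ¬(i₁ < q ∧ q < i₂))
include h12 hcons

theorem mem_jumpCands_iff_of_ne {j i' : ℕ} (hi' : i' ≠ i₁) :
    i' ∈ jumpCands d T Sel i₁ j ↔
      (∀ p < i₂ - i₁, mtch d (T.getD (i₁ + p) d) (T.getD (j + p) d)) ∧
        i' ∈ jumpCands d T Sel i₂ (j + (i₂ - i₁)) := by
  simp only [jumpCands, Finset.mem_filter]
  constructor
  · rintro ⟨hSel, hle, hlen, hfrag⟩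
    have hi₂ : i₂ ≤ i' := by
      by_contra
      exact hcons i' hSel ⟨by omega, by omega⟩
    obtain ⟨hblock, hrest⟩ := (fragMatch_iff_of_le h12.le hi₂).mp hfrag
    exact ⟨hblock, hSel, hi₂, by omega, hrest⟩
  · rintro ⟨hblock, hSel, hi₂, hlen, hrest⟩
    exact ⟨hSel, by omega, by omega, (fragMatch_iff_of_le h12.le hi₂).mpr ⟨hblock, hrest⟩⟩

theorem jumpCands_eq_insert {j : ℕ} (h1 : i₁ ∈ Sel) (hj : j < T.length)
    (hblock : ∀ p < i₂ - i₁, mtch d (T.getD (i₁ + p) d) (T.getD (j + p) d)) :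
    jumpCands d T Sel i₁ j = insert i₁ (jumpCands d T Sel i₂ (j + (i₂ - i₁))) := by
  ext i'
  rcases eq_or_ne i' i₁ with rfl | hi'
  · have hm := hblock 0 (by omega)
    simp only [Nat.add_zero] at hm
    simpa using self_mem_jumpCands h1 hj hm
  · rw [Finset.mem_insert, mem_jumpCands_iff_of_ne h12 hcons hi']
    exact ⟨fun h => Or.inr h.2, fun h => ⟨hblock, h.resolve_left hi'⟩⟩

theorem jumpCands_eq_singleton {j : ℕ} (h1 : i₁ ∈ Sel) (hj : j < T.length)
    (hm : mtch d (T.getD i₁ d) (T.getD j d))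
    (hblock : ¬ ∀ p < i₂ - i₁, mtch d (T.getD (i₁ + p) d) (T.getD (j + p) d)) :
    jumpCands d T Sel i₁ j = {i₁} := by
  ext i'
  rcases eq_or_ne i' i₁ with rfl | hi'
  · simpa using self_mem_jumpCands h1 hj hm
  · rw [Finset.mem_singleton, mem_jumpCands_iff_of_ne h12 hcons hi']
    exact ⟨fun h => absurd h.1 hblock, fun h => absurd h hi'⟩

end Jump

theorem Finset.max_insert_map_sub {s : Finset ℕ} {a b : ℕ} (hab : a ≤ b)
    (hs : ∀ x ∈ s, b ≤ x) :
    (insert a s).max.map (· - a) = max ((s.max.map (· - b)).map ((b - a) + ·)) 0 := by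
  rcases s.eq_empty_or_nonempty with rfl | hne
  · simp
  · have hb := hs _ (s.max'_mem hne)
    rw [Finset.max_insert, ← Finset.coe_max' hne, ← WithBot.coe_max,
      max_eq_right (by omega)]
    simp only [WithBot.map_coe]
    rw [show b - a + (s.max' hne - b) = s.max' hne - a by omega]
    exact (max_eq_left (WithBot.coe_le_coe.mpr (Nat.zero_le _))).symm

theorem stmt11_general [DecidableEq α] (d : α) (T : List α) (Sel : Finset ℕ)
    (i₁ i₂ j : ℕ) (h1 : i₁ ∈ Sel) (h12 : i₁ < i₂)
    (hcons : ∀ q ∈ Sel, ¬(i₁ < q ∧ q < i₂))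
    (hj : j + (i₂ - i₁) < T.length) :
    (¬ mtch d (T.getD i₁ d) (T.getD j d) → jump d T Sel i₁ j = ⊥) ∧
    ((mtch d (T.getD i₁ d) (T.getD j d) ∧
        ∀ p < i₂ - i₁, mtch d (T.getD (i₁ + p) d) (T.getD (j + p) d)) →
      jump d T Sel i₁ j =
        max (WithBot.map (fun v => (i₂ - i₁) + v) (jump d T Sel i₂ (j + (i₂ - i₁))))
          (0 : WithBot ℕ)) ∧
    ((mtch d (T.getD i₁ d) (T.getD j d) ∧
        ¬ ∀ p < i₂ - i₁, mtch d (T.getD (i₁ + p) d) (T.getD (j + p) d)) →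
      jump d T Sel i₁ j = (0 : WithBot ℕ)) := by
  have hj' : j < T.length := by omega
  refine ⟨fun hm => ?_, fun ⟨_, hblock⟩ => ?_, fun ⟨hm, hblock⟩ => ?_⟩
  · simp [jump_eq_map_max, jumpCands_eq_empty hm]
  · rw [jump_eq_map_max, jump_eq_map_max, jumpCands_eq_insert h12 hcons h1 hj' hblock]
    exact Finset.max_insert_map_sub h12.le fun _ => le_of_mem_jumpCands
  · simp [jump_eq_map_max, jumpCands_eq_singleton h12 hcons h1 hj' hm hblock]

theorem stmt11 [DecidableEq α] (d : α) (T : List α) (Sel : Finset ℕ)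
    (hne : T ≠ []) (hlast : (T.length - 1) ∈ Sel)
    (hSel : ∀ q ∈ Sel, q < T.length)
    (i₁ i₂ j : ℕ) (h1 : i₁ ∈ Sel) (h2 : i₂ ∈ Sel) (h12 : i₁ < i₂)
    (hcons : ∀ q ∈ Sel, ¬(i₁ < q ∧ q < i₂))
    (hj : j + (i₂ - i₁) < T.length) :
    (¬ mtch d (T.getD i₁ d) (T.getD j d) → jump d T Sel i₁ j = ⊥) ∧
    ((mtch d (T.getD i₁ d) (T.getD j d) ∧
        ∀ p < i₂ - i₁, mtch d (T.getD (i₁ + p) d) (T.getD (j + p) d)) →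
      jump d T Sel i₁ j =
        max (WithBot.map (fun v => (i₂ - i₁) + v) (jump d T Sel i₂ (j + (i₂ - i₁))))
          (0 : WithBot ℕ)) ∧
    ((mtch d (T.getD i₁ d) (T.getD j d) ∧
        ¬ ∀ p < i₂ - i₁, mtch d (T.getD (i₁ + p) d) (T.getD (j + p) d)) →
      jump d T Sel i₁ j = (0 : WithBot ℕ)) :=
  stmt11_general d T Sel i₁ i₂ j h1 h12 hcons hj
end

section
/- Let A be an a×b Boolean matrix and B a b×c Boolean matrix. Encode A into a string S_A of length ab in row-major order via φ_A(1) = '1', φ_A(0) = ◊, and encode B into a string S_B of length bc in column-major order via φ_B(1) = '0', φ_B(0) = '1'. Then for all i ∈ [0..a) and j ∈ [0..c): (AB)[i+1, j+1] = 1 if and only if LCEW_{S_A,S_B}(b·i + 1, b·j + 1) < b, where LCEW_{S_A,S_B}(p,q) is the length of the longest matching prefixes of S_A[p..] and S_B[q..] under the wildcard match relation. -/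
/-! The `i`-th row block of `S_A` and the `j`-th column block of `S_B` both have length `b` and
carry `φ_A(A[i,k])` against `φ_B(B[k,j])` at offset `k`. These mismatch exactly when both entries
are `1`, so the wildcard LCE stops before `b` iff some `k` witnesses `(AB)[i,j] = 1`. -/

variable {α : Type*}

theorem le_lcew2_iff [DecidableEq α] {d : α} {P Q : List α} {i j ℓ : ℕ}
    (hℓ : ℓ ≤ min (P.length - i) (Q.length - j)) :
    ℓ ≤ lcew2 d P Q i j ↔ ∀ p < ℓ, mtch d (P.getD (i + p) d) (Q.getD (j + p) d) := by
  constructor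
  · intro h p hp
    have hspec := Nat.findGreatest_spec (P := fun ℓ => ℓ ≤ min (P.length - i) (Q.length - j) ∧
      ∀ p < ℓ, mtch d (P.getD (i + p) d) (Q.getD (j + p) d)) (Nat.zero_le (P.length + Q.length))
      ⟨Nat.zero_le _, fun _ h => absurd h (Nat.not_lt_zero _)⟩
    exact hspec.2 p (hp.trans_le h)
  · exact fun h => Nat.le_findGreatest (by omega) ⟨hℓ, h⟩

theorem lcew2_lt_iff_exists_not_mtch [DecidableEq α] {d : α} {P Q : List α} {i j ℓ : ℕ}
    (hℓ : ℓ ≤ min (P.length - i) (Q.length - j)) :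
    lcew2 d P Q i j < ℓ ↔ ∃ p < ℓ, ¬ mtch d (P.getD (i + p) d) (Q.getD (j + p) d) := by
  rw [← not_le, le_lcew2_iff hℓ]
  simp only [not_forall, exists_prop]

theorem getD_map_range_mul_add (f : ℕ → ℕ → α) (d : α) {b q p n : ℕ} (hp : p < b)
    (hn : b * q + p < n) :
    ((List.range n).map fun idx => f (idx / b) (idx % b)).getD (b * q + p) d = f q p := by
  have hb : 0 < b := by omega
  simp [List.getD_eq_getElem?_getD, hn, Nat.mul_add_div hb, Nat.div_eq_of_lt hp,
    Nat.mod_eq_of_lt hp]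

theorem not_mtch_encode_iff (x y : Bool) :
    ¬ mtch 2 (if x then 1 else 2) (if y then 0 else 1) ↔ x = true ∧ y = true := by
  cases x <;> cases y <;> decide

theorem stmt12 (A B : ℕ → ℕ → Bool) (a b c : ℕ) (SA SB : List ℕ)
    (hSA : SA = (List.range (a * b)).map
      (fun idx => if A (idx / b) (idx % b) then 1 else 2))
    (hSB : SB = (List.range (b * c)).map
      (fun idx => if B (idx % b) (idx / b) then 0 else 1))
    (i j : ℕ) (hi : i < a) (hj : j < c) :
    ((∃ k < b, A i k = true ∧ B k j = true) ↔
      lcew2 2 SA SB (b * i) (b * j) < b) := by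
  have hAi : b * i + b ≤ a * b := Nat.mul_comm b a ▸ Nat.mul_le_mul_left b hi
  have hBj : b * j + b ≤ b * c := Nat.mul_le_mul_left b hj
  subst hSA hSB
  rw [lcew2_lt_iff_exists_not_mtch (by simp only [List.length_map, List.length_range]; omega)]
  refine exists_congr fun p => and_congr_right fun hp => ?_
  rw [getD_map_range_mul_add (fun r k => if A r k then 1 else 2) 2 hp (by omega),
    getD_map_range_mul_add (fun col k => if B k col then 0 else 1) 2 hp (by omega)]
  exact (not_mtch_encode_iff _ _).symm
end
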